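/- arXiv:2004.07766 — 6 statements merged into one kernel-verified Lean document; each statement's English description precedes it below -/
import Mathlib

section
/- For every colouring χ: ℕ → C of the natural numbers with an arbitrary (possibly infinite) set C of colours and every k ∈ ℕ, there exist a ∈ ℕ and d > 0 such that the arithmetic progression a, a+d, ..., a+(k-1)d is either monochromatic (χ takes the same value on all its terms) or rainbow (χ takes pairwise distinct values on its terms). In particular, any such colouring contains either arbitrarily long monochromatic arithmetic progressions or arbitrarily long rainbow arithmetic progressions. -/
/-!
Colour a pair `(a, d)` by the equality pattern of `χ` on `a, a + d, …, a + (k - 1) d`. There are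
finitely many patterns, however many colours `χ` uses, so Gallai's theorem in `ℕ × ℕ` gives a
homothetic copy of a suitable finite set on which the pattern is constant. If the pattern is
trivial, the progressions of the copy are rainbow. If it identifies the terms `i < j`, look at the
points `(j s, t)` with `s + t = m`: their `j`-th terms all equal `j m`, so their `i`-th terms
`i m + (j - i) s` form, as `s` varies, a monochromatic progression.
-/

open Finset

section

variable {C : Type*}

def IsMonochromaticAP (χ : ℕ → C) (k a d : ℕ) : Prop :=
  ∀ i j : Fin k, χ (a + i * d) = χ (a + j * d)

def IsRainbowAP (χ : ℕ → C) (k a d : ℕ) : Prop :=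
  Function.Injective fun i : Fin k => χ (a + i * d)

theorem IsMonochromaticAP.of_le {χ : ℕ → C} {k n a d : ℕ} (h : IsMonochromaticAP χ n a d)
    (hkn : k ≤ n) : IsMonochromaticAP χ k a d :=
  fun i j => h (Fin.castLE hkn i) (Fin.castLE hkn j)

theorem IsRainbowAP.of_le {χ : ℕ → C} {k n a d : ℕ} (h : IsRainbowAP χ n a d)
    (hkn : k ≤ n) : IsRainbowAP χ k a d :=
  fun _ _ hij => Fin.castLE_injective hkn (h hij)

def apPattern (χ : ℕ → C) (k : ℕ) (p : ℕ × ℕ) : Fin k → Fin k → Prop :=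
  fun i j => χ (p.1 + i * p.2) = χ (p.1 + j * p.2)

def scaledAntidiagonals (k : ℕ) : Finset (ℕ × ℕ) :=
  (range (k + 1) ×ˢ antidiagonal (k + 1)).image fun p => (p.1 * p.2.1, p.2.2)

theorem mem_scaledAntidiagonals {k j s t : ℕ} (hj : j ≤ k) (hst : s + t = k + 1) :
    (j * s, t) ∈ scaledAntidiagonals k :=
  mem_image.2 ⟨(j, s, t), by simp [Nat.lt_succ_of_le hj, hst], rfl⟩

theorem isMonochromaticAP_of_apPattern {χ : ℕ → C} {n m a b₁ b₂ i j : ℕ} (hij : i < j)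
    (hnm : n ≤ m + 1)
    (h : ∀ s t, s + t = m →
      χ (a * (j * s) + b₁ + i * (a * t + b₂)) = χ (a * (j * s) + b₁ + j * (a * t + b₂))) :
    IsMonochromaticAP χ n (b₁ + i * (a * m + b₂)) (a * (j - i)) := by
  obtain ⟨w, rfl⟩ := Nat.exists_eq_add_of_lt hij
  rw [show i + w + 1 - i = w + 1 by omega]
  have hterm : ∀ s : Fin n,
      χ (b₁ + i * (a * m + b₂) + s * (a * (w + 1))) = χ (b₁ + (i + w + 1) * (a * m + b₂)) := by
    intro s
    obtain ⟨t, rfl⟩ := Nat.exists_eq_add_of_le (show (s : ℕ) ≤ m by omega)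
    convert h s t rfl using 2 <;> ring
  exact fun s s' => (hterm s).trans (hterm s').symm

theorem exists_isMonochromaticAP_or_isRainbowAP_succ (χ : ℕ → C) (k : ℕ) :
    ∃ a d, 0 < d ∧ (IsMonochromaticAP χ (k + 1) a d ∨ IsRainbowAP χ (k + 1) a d) := by
  obtain ⟨a, ha, b, c, hc⟩ :=
    Combinatorics.exists_mono_homothetic_copy (scaledAntidiagonals k) (apPattern χ (k + 1))
  have hpat : ∀ j s t, j ≤ k → s + t = k + 1 → ∀ u v : Fin (k + 1),
      (c u v ↔ χ (a * (j * s) + b.1 + u * (a * t + b.2)) =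
        χ (a * (j * s) + b.1 + v * (a * t + b.2))) := by
    intro j s t hj hst u v
    rw [← hc _ (mem_scaledAntidiagonals hj hst)]
    simp [apPattern]
  by_cases hmono : ∃ u v : Fin (k + 1), u < v ∧ c u v
  · obtain ⟨u, v, huv, huvc⟩ := hmono
    exact ⟨_, _, Nat.mul_pos ha (Nat.sub_pos_of_lt huv), Or.inl <|
      isMonochromaticAP_of_apPattern (m := k + 1) huv (Nat.le_succ _)
        fun s t hst => (hpat v s t v.is_le hst u v).1 huvc⟩
  · push Not at hmono
    refine ⟨b.1, a * (k + 1) + b.2, by positivity, Or.inr fun u v huv => ?_⟩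
    have hpat₀ := hpat 0 0 (k + 1) (Nat.zero_le k) (zero_add _)
    simp only [mul_zero, zero_add] at hpat₀
    exact le_antisymm (not_lt.1 fun h => hmono v u h ((hpat₀ v u).2 huv.symm))
      (not_lt.1 fun h => hmono u v h ((hpat₀ u v).2 huv))

theorem exists_isMonochromaticAP_or_isRainbowAP (χ : ℕ → C) (k : ℕ) :
    ∃ a d, 0 < d ∧ (IsMonochromaticAP χ k a d ∨ IsRainbowAP χ k a d) := by
  obtain ⟨a, d, hd, hmono | hrainbow⟩ := exists_isMonochromaticAP_or_isRainbowAP_succ χ k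
  · exact ⟨a, d, hd, Or.inl (hmono.of_le k.le_succ)⟩
  · exact ⟨a, d, hd, Or.inr (hrainbow.of_le k.le_succ)⟩

theorem exists_isRainbowAP_of_not_exists_isMonochromaticAP {χ : ℕ → C} {k₀ : ℕ}
    (h : ¬∃ a d, 0 < d ∧ IsMonochromaticAP χ k₀ a d) (k : ℕ) :
    ∃ a d, 0 < d ∧ IsRainbowAP χ k a d := by
  obtain ⟨a, d, hd, hmono | hrainbow⟩ := exists_isMonochromaticAP_or_isRainbowAP χ (max k k₀)
  · exact absurd ⟨a, d, hd, hmono.of_le (le_max_right k k₀)⟩ h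
  · exact ⟨a, d, hd, hrainbow.of_le (le_max_left k k₀)⟩

end

/-- **Canonical Van der Waerden theorem (Erdős–Graham).**
For every colouring `χ : ℕ → C` with an arbitrary (possibly infinite) set of
colours and every `k`, there exist `a` and `d > 0` such that the arithmetic
progression `a, a + d, ..., a + (k-1)d` is either monochromatic or rainbow.
In particular, any such colouring contains either arbitrarily long
monochromatic arithmetic progressions or arbitrarily long rainbow arithmetic
progressions. -/
theorem canonical_vdw {C : Type*} (χ : ℕ → C) :
    (∀ k : ℕ, ∃ a d : ℕ, 0 < d ∧
      ((∀ i j : Fin k, χ (a + i * d) = χ (a + j * d)) ∨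
       Function.Injective fun i : Fin k => χ (a + i * d))) ∧
    ((∀ k : ℕ, ∃ a d : ℕ, 0 < d ∧ ∀ i j : Fin k, χ (a + i * d) = χ (a + j * d)) ∨
     (∀ k : ℕ, ∃ a d : ℕ, 0 < d ∧ Function.Injective fun i : Fin k => χ (a + i * d))) := by
  refine ⟨exists_isMonochromaticAP_or_isRainbowAP χ, or_iff_not_imp_left.2 fun hmono => ?_⟩
  obtain ⟨k₀, hk₀⟩ := not_forall.1 hmono
  exact exists_isRainbowAP_of_not_exists_isMonochromaticAP hk₀
end

section
/- Let p_1, ..., p_k be integral polynomials and let n ∈ ℕ. Then there exists N' ∈ ℕ such that for every colouring χ: {1,...,N'} → {1,...,n} with n colours there exist a ∈ ℤ and d > 0 such that {a, a+p_1(d), ..., a+p_k(d)} ⊆ {1,...,N'} and χ takes the same value on all of a, a+p_1(d), ..., a+p_k(d). -/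
open Polynomial Finset

/-!
Walters' combinatorial proof by PET induction. If `q` is a member of minimal degree of a family `P`
of integral polynomials, the derived family `{p (x + t) - p t - q x : p ∈ P, t ∈ T}` has fewer
distinct leading coefficients in degree `deg q` and no new ones in higher degrees, so by
well-founded induction it may be assumed to have the van der Waerden property, for every finite
`T`. Colour focusing then gives the property for `P`: colouring each point by the colours of a
long window starting there, the derived family yields a step `e` such that adding any derived
polynomial evaluated at `e` preserves colours on a window. Moving the focus of a colour-focused
configuration from `a` to `a - q e` then either produces a monochromatic pattern or adds a new
focused colour, which cannot happen more often than there are colours.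
-/

theorem Pi.toColex_lt_toColex_of_lt_of_le {ι : Type*} {β : ι → Type*} [LinearOrder ι]
    [WellFoundedGT ι] [∀ i, PartialOrder (β i)] {x y : ∀ i, β i} {i : ι} (hi : x i < y i)
    (hle : ∀ j > i, x j ≤ y j) : toColex x < toColex y := by
  obtain ⟨k, ⟨hik, hk⟩, hmax⟩ :=
    wellFounded_gt.has_min {j | i ≤ j ∧ x j ≠ y j} ⟨i, le_rfl, hi.ne⟩
  refine ⟨k, fun j hj => not_not.mp fun h => hmax j ⟨hik.trans hj.le, h⟩ hj, ?_⟩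
  rcases hik.eq_or_lt with rfl | hik
  exacts [hi, (hle k hik).lt_of_ne hk]

namespace Polynomial

variable {R : Type*} [CommRing R]

noncomputable def petDiff (q p : R[X]) (t : R) : R[X] :=
  taylor t p - (q + C (p.eval t))

variable {q p : R[X]} {t : R}

@[simp]
lemma eval_petDiff (x : R) : (petDiff q p t).eval x = p.eval (x + t) - q.eval x - p.eval t := by
  simp [petDiff, taylor_eval]
  ring

lemma natDegree_petDiff_le : (petDiff q p t).natDegree ≤ max p.natDegree q.natDegree := by
  simpa [petDiff, natDegree_taylor] using natDegree_sub_le (taylor t p) (q + C (p.eval t))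

lemma natDegree_petDiff_of_lt (h : q.natDegree < p.natDegree) :
    (petDiff q p t).natDegree = p.natDegree := by
  rw [petDiff, natDegree_sub_eq_left_of_natDegree_lt, natDegree_taylor]
  rwa [natDegree_add_C, natDegree_taylor]

lemma leadingCoeff_petDiff_of_lt (h : q.natDegree < p.natDegree) :
    (petDiff q p t).leadingCoeff = p.leadingCoeff := by
  rw [petDiff, leadingCoeff_sub_of_degree_lt, leadingCoeff_taylor]
  rw [degree_taylor]
  exact degree_lt_degree (by rwa [natDegree_add_C])

lemma coeff_petDiff_natDegree (hq : 1 ≤ q.natDegree) (hpq : p.natDegree = q.natDegree) :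
    (petDiff q p t).coeff q.natDegree = p.leadingCoeff - q.leadingCoeff := by
  rw [petDiff, coeff_sub, coeff_add, coeff_C, if_neg (by omega), add_zero, ← hpq,
    coeff_taylor_natDegree, hpq]
  rfl

variable [DecidableEq R]

noncomputable def petFamily (P : Finset R[X]) (q : R[X]) (T : Finset R) : Finset R[X] :=
  (P ×ˢ T).image fun pt => petDiff q pt.1 pt.2

variable {P : Finset R[X]} {T : Finset R}

lemma mem_petFamily {g : R[X]} :
    g ∈ petFamily P q T ↔ ∃ p ∈ P, ∃ t ∈ T, petDiff q p t = g := by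
  simp [petFamily, and_assoc]

noncomputable def leadingCoeffsOfDegree (P : Finset R[X]) (j : ℕ) : Finset R :=
  {p ∈ P | p ≠ 0 ∧ p.natDegree = j}.image leadingCoeff

lemma mem_leadingCoeffsOfDegree {j : ℕ} {l : R} :
    l ∈ leadingCoeffsOfDegree P j ↔ ∃ p ∈ P, p ≠ 0 ∧ p.natDegree = j ∧ p.leadingCoeff = l := by
  simp [leadingCoeffsOfDegree, and_assoc]

lemma leadingCoeffsOfDegree_erase_zero (j : ℕ) :
    leadingCoeffsOfDegree (P.erase 0) j = leadingCoeffsOfDegree P j := by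
  ext l
  simp only [mem_leadingCoeffsOfDegree, mem_erase]
  grind

lemma leadingCoeffsOfDegree_petFamily_subset_of_lt {j : ℕ} (hj : q.natDegree < j) :
    leadingCoeffsOfDegree (petFamily P q T) j ⊆ leadingCoeffsOfDegree P j := by
  intro l hl
  obtain ⟨g, hg, hg0, rfl, rfl⟩ := mem_leadingCoeffsOfDegree.mp hl
  obtain ⟨p, hp, t, -, rfl⟩ := mem_petFamily.mp hg
  have hqp : q.natDegree < p.natDegree := by
    have := natDegree_petDiff_le (q := q) (p := p) (t := t)
    omega
  exact mem_leadingCoeffsOfDegree.mpr ⟨p, hp, ne_zero_of_natDegree_gt hqp,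
    (natDegree_petDiff_of_lt hqp).symm, (leadingCoeff_petDiff_of_lt hqp).symm⟩

lemma leadingCoeffsOfDegree_petFamily_subset (hq : 1 ≤ q.natDegree) (hP0 : (0 : R[X]) ∉ P)
    (hmin : ∀ p ∈ P, q.natDegree ≤ p.natDegree) :
    leadingCoeffsOfDegree (petFamily P q T) q.natDegree ⊆
      ((leadingCoeffsOfDegree P q.natDegree).erase q.leadingCoeff).image (· - q.leadingCoeff) := by
  intro l hl
  obtain ⟨g, hg, hg0, hgdeg, rfl⟩ := mem_leadingCoeffsOfDegree.mp hl
  obtain ⟨p, hp, t, -, rfl⟩ := mem_petFamily.mp hg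
  have hpq : p.natDegree = q.natDegree := by
    refine (hmin p hp).antisymm' (not_lt.mp fun h => ?_)
    rw [natDegree_petDiff_of_lt h] at hgdeg
    omega
  have hlc : (petDiff q p t).leadingCoeff = p.leadingCoeff - q.leadingCoeff := by
    rw [leadingCoeff, hgdeg, coeff_petDiff_natDegree hq hpq]
  have hne : p.leadingCoeff ≠ q.leadingCoeff := by
    rw [← sub_ne_zero, ← hlc]
    exact leadingCoeff_ne_zero.mpr hg0
  refine mem_image.mpr ⟨p.leadingCoeff, mem_erase.mpr ⟨hne, ?_⟩, hlc.symm⟩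
  exact mem_leadingCoeffsOfDegree.mpr ⟨p, hp, ne_of_mem_of_not_mem hp hP0, hpq, rfl⟩

lemma card_leadingCoeffsOfDegree_petFamily_lt (hq : q ∈ P) (hq1 : 1 ≤ q.natDegree)
    (hP0 : (0 : R[X]) ∉ P) (hmin : ∀ p ∈ P, q.natDegree ≤ p.natDegree) :
    #(leadingCoeffsOfDegree (petFamily P q T) q.natDegree) <
      #(leadingCoeffsOfDegree P q.natDegree) :=
  calc #(leadingCoeffsOfDegree (petFamily P q T) q.natDegree)
      _ ≤ #((leadingCoeffsOfDegree P q.natDegree).erase q.leadingCoeff) :=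
        (card_le_card (leadingCoeffsOfDegree_petFamily_subset hq1 hP0 hmin)).trans card_image_le
      _ < #(leadingCoeffsOfDegree P q.natDegree) := card_erase_lt_of_mem <|
        mem_leadingCoeffsOfDegree.mpr ⟨q, hq, ne_of_mem_of_not_mem hq hP0, rfl, rfl⟩

/-- The number of distinct leading coefficients in each degree up to `D`, compared
colexicographically, i.e. from the top degree down. -/
noncomputable def petWeight (D : ℕ) (P : Finset R[X]) : Colex (Fin (D + 1) → ℕ) :=
  toColex fun j => #(leadingCoeffsOfDegree P j)

lemma petWeight_erase_zero (D : ℕ) (P : Finset R[X]) : petWeight D (P.erase 0) = petWeight D P := by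
  simp only [petWeight, leadingCoeffsOfDegree_erase_zero]

lemma petWeight_petFamily_lt {D : ℕ} (T : Finset R) (hq : q ∈ P)
    (hq1 : 1 ≤ q.natDegree) (hqD : q.natDegree ≤ D) (hP0 : (0 : R[X]) ∉ P)
    (hmin : ∀ p ∈ P, q.natDegree ≤ p.natDegree) :
    petWeight D (petFamily P q T) < petWeight D P :=
  Pi.toColex_lt_toColex_of_lt_of_le (i := ⟨q.natDegree, by omega⟩)
    (card_leadingCoeffsOfDegree_petFamily_lt hq hq1 hP0 hmin)
    fun j hj => card_le_card (leadingCoeffsOfDegree_petFamily_subset_of_lt hj)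

end Polynomial

section VanDerWaerden

variable {κ : Type*} {P : Finset ℤ[X]} {χ : ℤ → κ}

def HasMonoPattern (P : Finset ℤ[X]) (χ : ℤ → κ) (L : ℕ) (S : Set ℤ) : Prop :=
  ∃ a d : ℤ, d ∈ Set.Icc 1 (L : ℤ) ∧ a ∈ S ∧ ∀ p ∈ P, a + p.eval d ∈ S ∧ χ (a + p.eval d) = χ a

/-- The bound `d ≤ N` on the step matters: the colour-focusing argument evaluates derived
polynomials at a step found by this property and needs their values to stay bounded. -/
def IsVdWFamily (P : Finset ℤ[X]) : Prop :=
  ∀ (κ : Type) [Fintype κ], ∃ N : ℕ, ∀ (χ : ℤ → κ) (x : ℤ),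
    HasMonoPattern P χ N (Set.Icc x (x + N))

lemma HasMonoPattern.mono {L L' : ℕ} {S S' : Set ℤ} (h : HasMonoPattern P χ L S) (hL : L ≤ L')
    (hS : S ⊆ S') : HasMonoPattern P χ L' S' := by
  obtain ⟨a, d, hd, ha, hpat⟩ := h
  exact ⟨a, d, ⟨hd.1, hd.2.trans (by exact_mod_cast hL)⟩, hS ha,
    fun p hp => ⟨hS (hpat p hp).1, (hpat p hp).2⟩⟩

lemma isVdWFamily_empty : IsVdWFamily ∅ :=
  fun _ _ => ⟨1, fun _ x => ⟨x, 1, by simp, by simp, by simp⟩⟩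

lemma IsVdWFamily.of_erase_zero (h : IsVdWFamily (P.erase 0)) : IsVdWFamily P := by
  intro κ _
  obtain ⟨N, hN⟩ := h κ
  refine ⟨N, fun χ x => ?_⟩
  obtain ⟨a, d, hd, ha, hpat⟩ := hN χ x
  refine ⟨a, d, hd, ha, fun p hp => ?_⟩
  rcases eq_or_ne p 0 with rfl | hp0
  · simpa using ha
  · exact hpat p (mem_erase.mpr ⟨hp0, hp⟩)

lemma apply_sub_add_eq_of_window_eq {N : ℕ} {u v : ℤ}
    (h : (fun i : Fin (N + 1) => χ (u + i)) = fun i : Fin (N + 1) => χ (v + i)) {y : ℤ}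
    (hy : y ∈ Set.Icc v (v + N)) : χ (y - v + u) = χ y := by
  have hyv : (((y - v).toNat : ℕ) : ℤ) = y - v := Int.toNat_of_nonneg (by linarith [hy.1])
  have := congrFun h ⟨(y - v).toNat, by have := hy.2; omega⟩
  simp only [hyv] at this
  convert this using 2 <;> ring

/-- Walters' colour-focused configuration with focus `a`: one monochromatic copy of the pattern
for each colour in `C`. -/
def IsColorFocused (P : Finset ℤ[X]) (χ : ℤ → κ) (R : ℕ) (S : Set ℤ) (a : ℤ) (C : Finset κ)
    (r : κ → ℤ) : Prop :=
  a ∈ S ∧ ∀ c ∈ C, r c ∈ Set.Icc 1 (R : ℤ) ∧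
    ∀ p ∈ P, a + p.eval (r c) ∈ S ∧ χ (a + p.eval (r c)) = c

variable {R : ℕ} {S : Set ℤ} {a : ℤ} {C : Finset κ} {r : κ → ℤ}

lemma IsColorFocused.hasMonoPattern (h : IsColorFocused P χ R S a C r) (ha : χ a ∈ C) :
    HasMonoPattern P χ R S :=
  ⟨a, r (χ a), (h.2 _ ha).1, h.1, (h.2 _ ha).2⟩

/-- The new copies sit at `a - q e + p (r c + e) = (a + p (r c)) + petDiff q p (r c) e`, and the
copy of colour `χ a` at `a - q e + p e = a + petDiff q p 0 e`, so `hshift` moves the old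
configuration (and its focus) onto the new one. -/
lemma IsColorFocused.insert [DecidableEq κ] {q : ℤ[X]} {R' : ℕ} {S' : Set ℤ} {e : ℤ}
    (hP0 : ∀ p ∈ P, p.eval 0 = 0) (h : IsColorFocused P χ R S a C r) (he : 1 ≤ e)
    (hR : R + e ≤ R') (ha : a - q.eval e ∈ S')
    (hshift : ∀ p ∈ P, ∀ t ∈ Set.Icc 0 (R : ℤ), ∀ y ∈ S,
      y + (petDiff q p t).eval e ∈ S' ∧ χ (y + (petDiff q p t).eval e) = χ y) :
    IsColorFocused P χ R' S' (a - q.eval e) (insert (χ a) C)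
      (fun c => if c = χ a then e else r c + e) := by
  refine ⟨ha, fun c hc => ?_⟩
  by_cases hca : c = χ a
  · refine ⟨by simp only [if_pos hca]; constructor <;> omega, fun p hp => ?_⟩
    have hpt : a - q.eval e + p.eval e = a + (petDiff q p 0).eval e := by
      simp only [eval_petDiff, add_zero, hP0 p hp]
      ring
    simp only [if_pos hca]
    rw [hpt, hca]
    exact hshift p hp 0 ⟨le_rfl, by positivity⟩ a h.1
  · obtain ⟨⟨hr1, hrR⟩, hpat⟩ := h.2 c ((mem_insert.mp hc).resolve_left hca)
    refine ⟨by simp only [if_neg hca]; constructor <;> omega, fun p hp => ?_⟩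
    have hpt : a - q.eval e + p.eval (r c + e) = a + p.eval (r c) + (petDiff q p (r c)).eval e := by
      rw [eval_petDiff, add_comm e]
      ring
    simp only [if_neg hca, hpt]
    obtain ⟨hmem, hcol⟩ := hshift p hp (r c) ⟨by omega, hrR⟩ _ (hpat p hp).1
    exact ⟨hmem, hcol.trans (hpat p hp).2⟩

lemma exists_hasMonoPattern_or_isColorFocused_succ (hP0 : ∀ p ∈ P, p.eval 0 = 0) {q : ℤ[X]}
    (hQ : ∀ T, IsVdWFamily (petFamily P q T)) {κ : Type} [Fintype κ] {s N : ℕ}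
    (hN : ∀ (χ : ℤ → κ) (x : ℤ), HasMonoPattern P χ N (Set.Icc x (x + N)) ∨
      ∃ a C r, #C = s ∧ IsColorFocused P χ N (Set.Icc x (x + N)) a C r) :
    ∃ N' : ℕ, ∀ (χ : ℤ → κ) (x : ℤ), HasMonoPattern P χ N' (Set.Icc x (x + N')) ∨
      ∃ a C r, #C = s + 1 ∧ IsColorFocused P χ N' (Set.Icc x (x + N')) a C r := by
  classical
  obtain ⟨M, hM⟩ := hQ (Finset.Icc 0 N) (Fin (N + 1) → κ)
  set B := (Finset.Icc 1 (M : ℤ)).sup fun e => (q.eval e).natAbs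
  refine ⟨N + M + 2 * B, fun χ x => ?_⟩
  -- colour each point by the colours of the window of length `N + 1` starting there
  obtain ⟨b, e, ⟨he₁, he₂⟩, ⟨hb₁, hb₂⟩, hbg⟩ :=
    hM (fun y (i : Fin (N + 1)) => χ (y + i)) (x + B)
  have hqe : (q.eval e).natAbs ≤ B := Finset.le_sup (f := fun e => (q.eval e).natAbs)
    (Finset.mem_Icc.mpr ⟨he₁, he₂⟩)
  have hwindow : Set.Icc b (b + N) ⊆ Set.Icc x (x + ↑(N + M + 2 * B)) :=
    Set.Icc_subset_Icc (by omega) (by push_cast; omega)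
  have hshift : ∀ p ∈ P, ∀ t ∈ Set.Icc 0 (N : ℤ), ∀ y ∈ Set.Icc b (b + N),
      y + (petDiff q p t).eval e ∈ Set.Icc x (x + ↑(N + M + 2 * B)) ∧
        χ (y + (petDiff q p t).eval e) = χ y := by
    rintro p hp t ht y ⟨hy₁, hy₂⟩
    obtain ⟨⟨hg1, hg2⟩, hcol⟩ :=
      hbg _ (mem_petFamily.mpr ⟨p, hp, t, Finset.mem_Icc.mpr ht, rfl⟩)
    refine ⟨⟨by omega, by push_cast; omega⟩, ?_⟩
    convert apply_sub_add_eq_of_window_eq hcol ⟨hy₁, hy₂⟩ using 2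
    ring
  rcases hN χ b with hpat | ⟨a, C, r, hC, hfoc⟩
  · exact .inl (hpat.mono (by omega) hwindow)
  by_cases hcol : χ a ∈ C
  · exact .inl ((hfoc.hasMonoPattern hcol).mono (by omega) hwindow)
  · obtain ⟨ha₁, ha₂⟩ := hfoc.1
    refine .inr ⟨_, _, _, by rw [card_insert_of_notMem hcol, hC], hfoc.insert hP0 he₁
      (by push_cast; omega) ⟨by omega, by push_cast; omega⟩ hshift⟩

lemma exists_hasMonoPattern_or_isColorFocused (hP0 : ∀ p ∈ P, p.eval 0 = 0) (q : ℤ[X])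
    (hQ : ∀ T, IsVdWFamily (petFamily P q T)) (κ : Type) [Fintype κ] (s : ℕ) :
    ∃ N : ℕ, ∀ (χ : ℤ → κ) (x : ℤ), HasMonoPattern P χ N (Set.Icc x (x + N)) ∨
      ∃ a C r, #C = s ∧ IsColorFocused P χ N (Set.Icc x (x + N)) a C r := by
  induction s with
  | zero => exact ⟨0, fun _ x => .inr ⟨x, ∅, 0, rfl, by simp [IsColorFocused]⟩⟩
  | succ s ih =>
    obtain ⟨N, hN⟩ := ih
    exact exists_hasMonoPattern_or_isColorFocused_succ hP0 hQ hN

theorem IsVdWFamily.of_petFamily (hP0 : ∀ p ∈ P, p.eval 0 = 0) (q : ℤ[X])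
    (hQ : ∀ T, IsVdWFamily (petFamily P q T)) : IsVdWFamily P := by
  intro κ _
  obtain ⟨N, hN⟩ := exists_hasMonoPattern_or_isColorFocused hP0 q hQ κ (Fintype.card κ + 1)
  refine ⟨N, fun χ x => (hN χ x).resolve_right ?_⟩
  rintro ⟨-, C, -, hC, -⟩
  have := C.card_le_univ
  omega

theorem isVdWFamily_of_natDegree_le (D : ℕ) (P : Finset ℤ[X])
    (hP : ∀ p ∈ P, p.eval 0 = 0 ∧ p.natDegree ≤ D) : IsVdWFamily P := by
  induction P using (InvImage.wf (fun P : Finset ℤ[X] => petWeight D P) wellFounded_lt).induction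
    with | _ P ih
  -- `0` is discarded first, as `petDiff q 0 t = -q` would add the leading coefficient of `-q`.
  refine IsVdWFamily.of_erase_zero ?_
  rcases (P.erase 0).eq_empty_or_nonempty with hP' | hP'
  · rw [hP']
    exact isVdWFamily_empty
  obtain ⟨q, hq, hmin⟩ := (P.erase 0).exists_min_image natDegree hP'
  obtain ⟨hq0, hqD⟩ := hP q (mem_of_mem_erase hq)
  have hq1 : 1 ≤ q.natDegree :=
    natDegree_pos_iff_degree_pos.mpr (degree_pos_of_root (ne_of_mem_erase hq) hq0)
  refine .of_petFamily (fun p hp => (hP p (mem_of_mem_erase hp)).1) q fun T => ih _ ?_ ?_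
  · rw [InvImage, ← petWeight_erase_zero D P]
    exact petWeight_petFamily_lt T hq hq1 hqD (notMem_erase 0 P) hmin
  · intro g hg
    obtain ⟨p, hp, t, -, rfl⟩ := mem_petFamily.mp hg
    obtain ⟨-, hpD⟩ := hP p (mem_of_mem_erase hp)
    exact ⟨by simp [hq0], natDegree_petDiff_le.trans (max_le hpD hqD)⟩

end VanDerWaerden

/-- **Polynomial Van der Waerden theorem (Bergelson–Leibman).**
Let `p 1, ..., p k` be integral polynomials (integer coefficients, vanishing
at `0`) and let `n ∈ ℕ`.  Then there exists `N'` such that for every colouring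
of `{1, ..., N'}` with `n` colours there exist `a ∈ ℤ` and `d > 0` such that
`{a, a + p 1 d, ..., a + p k d} ⊆ {1, ..., N'}` is monochromatic. -/
theorem polynomial_vdw {k : ℕ} (n : ℕ) (p : Fin k → Polynomial ℤ)
    (hp0 : ∀ i, (p i).eval 0 = 0) :
    ∃ N' : ℕ, ∀ χ : ℤ → Fin n,
      ∃ a d : ℤ, 0 < d ∧
        a ∈ Set.Icc (1 : ℤ) (N' : ℤ) ∧
        (∀ i : Fin k, a + (p i).eval d ∈ Set.Icc (1 : ℤ) (N' : ℤ)) ∧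
        (∀ i : Fin k, χ (a + (p i).eval d) = χ a) := by
  obtain ⟨N, hN⟩ := isVdWFamily_of_natDegree_le (univ.sup fun i => (p i).natDegree) (univ.image p)
    (by simpa using fun i => ⟨hp0 i, le_sup (f := fun i => (p i).natDegree) (mem_univ i)⟩) (Fin n)
  refine ⟨1 + N, fun χ => ?_⟩
  obtain ⟨a, d, hd, ha, hpat⟩ := hN χ 1
  have hpat i := hpat (p i) (mem_image_of_mem p (mem_univ i))
  exact ⟨a, d, hd.1, by exact_mod_cast ha, fun i => by exact_mod_cast (hpat i).1,
    fun i => (hpat i).2⟩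
end

section
/- Let k, t, m ∈ ℕ. Then there exists N_0 ∈ ℕ such that for every m-type colouring Δ: {1,...,N_0} → ℕ^m, at least one of the following holds: (i) there exist a ∈ ℕ, d > 0 and a coordinate j ∈ {1,...,m} such that the arithmetic progression a, a+d, ..., a+(k-1)d lies in {1,...,N_0} and Δ_j takes the same value on all its terms; or (ii) there exist a ∈ ℕ and d > 0 such that the arithmetic progression a, a+d, ..., a+(t-1)d lies in {1,...,N_0} and is rainbow with respect to Δ. -/
/-!
Colour each pair `(x, d)` by the equality pattern of `Δ` on `x, x + d, …, x + (t - 1) d`: which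
coordinates of which terms coincide. There are finitely many patterns, so a finite form of
Gallai's theorem on `ℕ × ℕ` (derived from Hales–Jewett) yields a homothetic copy `a • S + b`
of the grid `S = [0, tk + 1] × [0, k + 1]` on which the pattern is constant, inside a finite set `T`
that depends only on `S`; this `T` bounds `N₀`.
If the common pattern has no coincidence between distinct terms, the progression coded by
`a • (1, 1) + b` is rainbow. If it has `Δ_j (x + p d) = Δ_{j'} (x + q d)` with `q < p`, then along
the points `a • (q (k - l) + 1, l) + b`, `l < k`, the `q`-th term stays fixed while the `p`-th term
runs through a `k`-term progression of difference `a (p - q)`, on which `Δ_j` is thus constant.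
-/

open Combinatorics Finset

theorem Combinatorics.Line.exists_sum_apply_eq_smul_add {α ι M : Type*} [Fintype ι]
    [AddCommMonoid M] (f : α → M) (l : Line α ι) :
    ∃ a > 0, ∃ b : M, ∀ x, ∑ i, f (l x i) = a • f x + b := by
  classical
  refine ⟨#{i | l.idxFun i = none}, card_pos.mpr ⟨l.proper.choose, by
    simpa using l.proper.choose_spec⟩, ∑ i, ((l.idxFun i).map f).getD 0, fun x => ?_⟩
  have hterm : ∀ i, f (l x i) =
      (if l.idxFun i = none then f x else 0) + ((l.idxFun i).map f).getD 0 := by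
    intro i
    cases h : l.idxFun i with
    | none => simp [h]
    | some y => simp [h]
  rw [sum_congr rfl fun i _ => hterm i, sum_add_distrib, sum_ite,
    sum_const_zero, add_zero, sum_const]

theorem Combinatorics.exists_finset_mono_homothetic_copy {M κ : Type*} [AddCommMonoid M]
    [Finite κ] (S : Finset M) :
    ∃ T : Finset M, ∀ C : M → κ, ∃ a > 0, ∃ (b : M) (c : κ),
      ∀ s ∈ S, a • s + b ∈ T ∧ C (a • s + b) = c := by
  classical
  obtain ⟨ι, _, hι⟩ := Line.exists_mono_in_high_dimension S κ
  refine ⟨univ.image fun v : ι → S => ∑ i, (v i : M), fun C => ?_⟩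
  obtain ⟨l, c, hl⟩ := hι fun v => C (∑ i, (v i : M))
  obtain ⟨a, ha, b, hab⟩ := l.exists_sum_apply_eq_smul_add ((↑) : S → M)
  refine ⟨a, ha, b, c, fun s hs => ?_⟩
  rw [← hab ⟨s, hs⟩]
  exact ⟨mem_image_of_mem _ (mem_univ _), hl ⟨s, hs⟩⟩

namespace CanonicalVdW

variable {ι α : Type*}

def apPattern (Δ : ℕ → ι → α) (t : ℕ) (xd : ℕ × ℕ) (u v : Fin t × ι) : Prop :=
  Δ (xd.1 + u.1 * xd.2) u.2 = Δ (xd.1 + v.1 * xd.2) v.2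

theorem ap_isRainbow_of_not_apPattern {Δ : ℕ → ι → α} {t : ℕ} {xd : ℕ × ℕ}
    (h : ∀ p q : Fin t, ∀ j j', q < p → ¬ apPattern Δ t xd (p, j) (q, j')) :
    ∀ i i' : Fin t, i ≠ i' → ∀ j j', Δ (xd.1 + i * xd.2) j ≠ Δ (xd.1 + i' * xd.2) j' := by
  intro i i' hii' j j'
  rcases lt_or_gt_of_ne hii' with hlt | hlt
  · exact Ne.symm (h i' i j' j hlt)
  · exact h i i' j j' hlt

theorem homothety_ap_term (a : ℕ) (b : ℕ × ℕ) {q k l i : ℕ} (hl : l ≤ k) (hqi : q ≤ i) :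
    (a • (q * (k - l) + 1, l) + b).1 + i * (a • (q * (k - l) + 1, l) + b).2 =
      a * (q * k + 1) + b.1 + i * b.2 + l * (a * (i - q)) := by
  obtain ⟨r, rfl⟩ := Nat.exists_eq_add_of_le hl
  obtain ⟨e, rfl⟩ := Nat.exists_eq_add_of_le hqi
  simp only [Nat.add_sub_cancel_left, Prod.fst_add, Prod.snd_add, smul_eq_mul, Prod.smul_mk]
  ring

theorem apply_ap_eq_of_apPattern {Δ : ℕ → ι → α} {t k a : ℕ} {b : ℕ × ℕ} {p q : Fin t}
    {j j' : ι} (hqp : q ≤ p)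
    (h : ∀ l < k, apPattern Δ t (a • (q * (k - l) + 1, l) + b) (p, j) (q, j')) {l : ℕ}
    (hl : l < k) :
    Δ (a * (q * k + 1) + b.1 + p * b.2 + l * (a * (p - q))) j =
      Δ (a * (q * k + 1) + b.1 + q * b.2) j' := by
  have := h l hl
  rwa [apPattern, homothety_ap_term a b hl.le hqp, homothety_ap_term a b hl.le le_rfl,
    Nat.sub_self, mul_zero, mul_zero, add_zero] at this

theorem mk_mem_grid {q t k l : ℕ} (hq : q < t) (hl : l < k) :
    (q * (k - l) + 1, l) ∈ range (t * k + 2) ×ˢ range (k + 2) := by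
  simp only [mem_product, mem_range]
  constructor
  · nlinarith [Nat.sub_le k l]
  · omega

theorem ap_term_mem_Icc_sup {T : Finset (ℕ × ℕ)} {xd : ℕ × ℕ} (hxd : xd ∈ T) (hx : 0 < xd.1)
    {i t : ℕ} (hi : i ≤ t) : xd.1 + i * xd.2 ∈ Set.Icc 1 (T.sup fun xd => xd.1 + t * xd.2) :=
  ⟨hx.trans_le (Nat.le_add_right _ _),
    le_trans (by gcongr) (le_sup (f := fun xd => xd.1 + t * xd.2) hxd)⟩

theorem homothety_fst_pos {a : ℕ} (ha : 0 < a) (b : ℕ × ℕ) {s : ℕ × ℕ} (hs : 0 < s.1) :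
    0 < (a • s + b).1 := by
  simp only [Prod.fst_add, Prod.smul_fst, smul_eq_mul]
  positivity

end CanonicalVdW

open CanonicalVdW in
/-- **Canonical Van der Waerden for `m`-type colourings.**
For all `k, t, m` there exists `N₀` such that for every `m`-type colouring
`Δ : {1, ..., N₀} → ℕ^m` one of the following holds:
(i) there is an arithmetic progression `a, a + d, ..., a + (k-1)d` in
`{1, ..., N₀}` with `d > 0` which is monochromatic in some coordinate
`j ∈ {1, ..., m}`; or
(ii) there is an arithmetic progression `a, a + d, ..., a + (t-1)d` in
`{1, ..., N₀}` with `d > 0` which is rainbow with respect to `Δ`, i.e. for any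
two distinct terms `x, y` and any coordinates `j, j'` one has `Δ_j x ≠ Δ_{j'} y`. -/
theorem canonical_vdw_mtype (k t m : ℕ) :
    ∃ N₀ : ℕ, ∀ Δ : ℕ → (Fin m → ℕ),
      (∃ (a d : ℕ) (j : Fin m), 0 < d ∧
        (∀ i : Fin k, a + i * d ∈ Set.Icc 1 N₀) ∧
        (∀ i i' : Fin k, Δ (a + i * d) j = Δ (a + i' * d) j)) ∨
      (∃ a d : ℕ, 0 < d ∧
        (∀ i : Fin t, a + i * d ∈ Set.Icc 1 N₀) ∧
        (∀ i i' : Fin t, i ≠ i' → ∀ j j' : Fin m,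
          Δ (a + i * d) j ≠ Δ (a + i' * d) j')) := by
  classical
  let S := range (t * k + 2) ×ˢ range (k + 2)
  obtain ⟨T, hT⟩ :=
    exists_finset_mono_homothetic_copy (κ := Fin t × Fin m → Fin t × Fin m → Prop) S
  refine ⟨T.sup fun xd => xd.1 + t * xd.2, fun Δ => ?_⟩
  obtain ⟨a, ha, b, c, hc⟩ := hT (apPattern Δ t)
  by_cases h : ∃ p q : Fin t, ∃ j j', q < p ∧ c (p, j) (q, j')
  · obtain ⟨p, q, j, j', hqp, hc_pq⟩ := h
    have hS : ∀ l < k, (q * (k - l) + 1, l) ∈ S := fun l hl => mk_mem_grid q.isLt hl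
    have hpat : ∀ l < k, apPattern Δ t (a • (q * (k - l) + 1, l) + b) (p, j) (q, j') :=
      fun l hl => (hc _ (hS l hl)).2 ▸ hc_pq
    refine .inl ⟨_, a * (p - q), j, Nat.mul_pos ha (Nat.sub_pos_of_lt hqp), fun l => ?_,
      fun l l' => by rw [apply_ap_eq_of_apPattern hqp.le hpat l.isLt,
        apply_ap_eq_of_apPattern hqp.le hpat l'.isLt]⟩
    rw [← homothety_ap_term a b l.isLt.le hqp.le]
    exact ap_term_mem_Icc_sup (hc _ (hS l l.isLt)).1 (homothety_fst_pos ha b (Nat.succ_pos _))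
      p.isLt.le
  · push Not at h
    have hS : ((1, 1) : ℕ × ℕ) ∈ S := by simp [S]
    obtain ⟨hmem, hpat⟩ := hc _ hS
    refine .inr ⟨_, _, ?_, fun i => ap_term_mem_Icc_sup hmem (homothety_fst_pos ha b one_pos)
      i.isLt.le, ap_isRainbow_of_not_apPattern fun p q j j' hqp => hpat ▸ h p q j j' hqp⟩
    simp only [Prod.snd_add, Prod.smul_snd, smul_eq_mul, mul_one]
    omega
end

section
/- Let p_1, ..., p_k be pairwise distinct integral polynomials. Then there exists h ∈ ℕ such that for every pair of indices i ≠ j in {1,...,k} and every integer h' > h, the polynomial identity p_j(x) = p_i(h' + x) − p_i(h') fails, i.e. p_j(x) ≠ p_i(x + h') − p_i(h') as elements of ℤ[x]. -/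
open Polynomial

/-- **Lemma 4.1.** Let `p 1, ..., p k` be pairwise distinct integral
polynomials (integer coefficients, vanishing at `0`).  Then there exists
`h ∈ ℕ` such that for all indices `i ≠ j` and every integer `h' > h`, one has
`p j ≠ p i (x + h') - p i h'` as elements of `ℤ[x]`. -/
theorem exists_translation_separator {k : ℕ} (p : Fin k → Polynomial ℤ)
    (hp0 : ∀ i, (p i).eval 0 = 0)
    (hpdist : ∀ i j, i ≠ j → p i ≠ p j) :
    ∃ h : ℕ, ∀ i j : Fin k, i ≠ j → ∀ h' : ℤ, (h : ℤ) < h' →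
      p j ≠ (p i).comp (X + C h') - C ((p i).eval h') := by
  classical
  refine ⟨Finset.univ.sup (fun ij : Fin k × Fin k =>
    ((p ij.2).coeff ((p ij.1).natDegree - 1)
      - (p ij.1).coeff ((p ij.1).natDegree - 1)).natAbs), ?_⟩
  intro i j hij h' hh' heq
  have hc0 : (p i).coeff 0 = 0 := by
    rw [Polynomial.coeff_zero_eq_eval_zero]; exact hp0 i
  by_cases hle : (p i).natDegree ≤ 1
  · have hpi : p i = C ((p i).coeff 1) * X := by
      have h1 := Polynomial.eq_X_add_C_of_natDegree_le_one hle
      rwa [hc0, map_zero, add_zero] at h1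
    apply hpdist i j hij
    rw [heq, hpi]
    simp [mul_comm]
    ring
  · push_neg at hle
    obtain ⟨m, hn⟩ : ∃ m, (p i).natDegree = m + 2 :=
      ⟨(p i).natDegree - 2, by omega⟩
    have hpne : p i ≠ 0 := by
      intro h0
      rw [h0] at hn
      simp at hn
    have ha : (p i).coeff (m + 2) ≠ 0 := by
      rw [← hn]
      exact Polynomial.leadingCoeff_ne_zero.mpr hpne
    have heq' : p j = Polynomial.taylor h' (p i) - C ((p i).eval h') := by
      rwa [Polynomial.taylor_apply]
    have hco := congrArg (fun q => q.coeff (m + 1)) heq'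
    simp only [Polynomial.coeff_sub, Polynomial.taylor_coeff,
      Polynomial.coeff_C, Nat.succ_ne_zero, if_false, sub_zero] at hco
    set g := Polynomial.hasseDeriv (m + 1) (p i) with hg
    have hgdeg : g.natDegree < 2 := by
      have := Polynomial.natDegree_hasseDeriv_le (p i) (m + 1)
      rw [hn, ← hg] at this
      omega
    have heval : g.eval h' = g.coeff 0 + g.coeff 1 * h' := by
      rw [Polynomial.eval_eq_sum_range' hgdeg]
      simp [Finset.sum_range_succ]
    have hg0 : g.coeff 0 = (p i).coeff (m + 1) := by
      rw [hg, Polynomial.hasseDeriv_coeff]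
      simp
    have hg1 : g.coeff 1 = (m + 2 : ℤ) * (p i).coeff (m + 2) := by
      have hch : (1 + (m + 1)).choose (m + 1) = m + 2 := by
        rw [Nat.add_comm 1 (m + 1), Nat.choose_succ_self_right]
      have h2 : 1 + (m + 1) = m + 2 := by omega
      rw [hg, Polynomial.hasseDeriv_coeff, hch, h2]
      push_cast
      ring
    rw [heval, hg0, hg1] at hco
    have hb : ((p j).coeff (m + 1) - (p i).coeff (m + 1)).natAbs ≤
        Finset.univ.sup (fun ij : Fin k × Fin k =>
          ((p ij.2).coeff ((p ij.1).natDegree - 1)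
            - (p ij.1).coeff ((p ij.1).natDegree - 1)).natAbs) := by
      have := Finset.le_sup (f := fun ij : Fin k × Fin k =>
          ((p ij.2).coeff ((p ij.1).natDegree - 1)
            - (p ij.1).coeff ((p ij.1).natDegree - 1)).natAbs)
          (Finset.mem_univ (i, j))
      simpa [hn] using this
    have key : (p j).coeff (m + 1) - (p i).coeff (m + 1)
        = ((m + 2 : ℤ) * (p i).coeff (m + 2)) * h' := by
      rw [hco]; ring
    have h1 : (1 : ℤ) ≤ |(m + 2 : ℤ) * (p i).coeff (m + 2)| := by
      have hne : (m + 2 : ℤ) * (p i).coeff (m + 2) ≠ 0 := by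
        apply mul_ne_zero
        · positivity
        · exact ha
      exact Int.one_le_abs hne
    have habs : |(p j).coeff (m + 1) - (p i).coeff (m + 1)| ≥ |h'| := by
      rw [key, abs_mul]
      nlinarith [abs_nonneg h', abs_nonneg ((m + 2 : ℤ) * (p i).coeff (m + 2))]
    have hh'pos : 0 < h' := lt_of_le_of_lt (by positivity) hh'
    have habs' : |h'| = h' := abs_of_pos hh'pos
    have h3 : ((((p j).coeff (m + 1) - (p i).coeff (m + 1)).natAbs : ℤ))
        ≤ ((Finset.univ.sup (fun ij : Fin k × Fin k =>
          ((p ij.2).coeff ((p ij.1).natDegree - 1)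
            - (p ij.1).coeff ((p ij.1).natDegree - 1)).natAbs) : ℕ) : ℤ) := by
      exact_mod_cast hb
    have h4 : h' ≤ ((((p j).coeff (m + 1) - (p i).coeff (m + 1)).natAbs : ℤ)) := by
      rw [← Int.abs_eq_natAbs, ← habs']
      exact habs
    linarith
end

section
/- Let m ∈ ℕ and let Δ: ℤ → ℕ^m be an m-type colouring. Let A_1, ..., A_{m+1} be pairwise disjoint nonempty finite subsets of ℤ whose union A_1 ∪ ... ∪ A_{m+1} is rainbow with respect to Δ, and let a ∈ ℤ be an element not belonging to A_1 ∪ ... ∪ A_{m+1}. Then there exists an index w ∈ {1,...,m+1} such that A_w ∪ {a} is rainbow with respect to Δ. -/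
/-- **Pigeonhole lemma for rainbow sets.**
Let `Δ : ℤ → ℕ^m` be an `m`-type colouring and let `A 1, ..., A (m+1)` be
pairwise disjoint nonempty finite subsets of `ℤ` whose union is rainbow with
respect to `Δ` (its elements being pairwise distinct with all their coordinate
colours pairwise different), and let `a ∈ ℤ` not belong to the union.  Then
there is an index `w` such that `A w ∪ {a}` is rainbow with respect to `Δ`. -/
theorem rainbow_pigeonhole (m : ℕ) (Δ : ℤ → Fin m → ℕ)
    (A : Fin (m + 1) → Finset ℤ)
    (hdisj : ∀ i j, i ≠ j → Disjoint (A i) (A j))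
    (hne : ∀ i, (A i).Nonempty)
    (hrain : ∀ x ∈ Finset.univ.biUnion A, ∀ y ∈ Finset.univ.biUnion A,
      x ≠ y → ∀ j j' : Fin m, Δ x j ≠ Δ y j')
    (a : ℤ) (ha : a ∉ Finset.univ.biUnion A) :
    ∃ w : Fin (m + 1), ∀ x ∈ insert a (A w), ∀ y ∈ insert a (A w),
      x ≠ y → ∀ j j' : Fin m, Δ x j ≠ Δ y j' := by
  classical
  set S : Finset (Fin (m + 1)) :=
    Finset.univ.filter (fun w => ∃ x ∈ A w, ∃ j j' : Fin m, Δ x j = Δ a j') with hS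
  have hmem : ∀ i (x : ℤ), x ∈ A i → x ∈ Finset.univ.biUnion A := by
    intro i x hx
    exact Finset.mem_biUnion.2 ⟨i, Finset.mem_univ _, hx⟩
  -- injective map from S to Fin m
  have hcard : S.card ≤ m := by
    have : ∀ w ∈ S, ∃ j' : Fin m, ∃ x ∈ A w, ∃ j : Fin m, Δ x j = Δ a j' := by
      intro w hw
      obtain ⟨x, hx, j, j', h⟩ := (Finset.mem_filter.1 hw).2
      exact ⟨j', x, hx, j, h⟩
    choose f x hx j hj using this
    have hinj : ∀ w (hw : w ∈ S), ∀ w' (hw' : w' ∈ S), f w hw = f w' hw' → w = w' := by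
      intro w hw w' hw' hf
      by_contra hne'
      have hxy : x w hw ≠ x w' hw' := by
        intro h
        exact (Finset.disjoint_left.1 (hdisj w w' hne') (hx w hw)) (h ▸ hx w' hw')
      exact hrain _ (hmem _ _ (hx w hw)) _ (hmem _ _ (hx w' hw')) hxy _ _
        (by rw [hj w hw, hf, hj w' hw'])
    have := Finset.card_le_card_of_injOn (fun w => f w.1 w.2)
      (fun _ _ => Finset.mem_univ _)
      (by
        intro ⟨w, hw⟩ _ ⟨w', hw'⟩ _ h
        exact Subtype.ext (hinj w hw w' hw' h)) (s := S.attach) (t := (Finset.univ : Finset (Fin m)))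
    simpa using this
  have : ∃ w : Fin (m + 1), w ∉ S := by
    by_contra h
    push_neg at h
    have : (Finset.univ : Finset (Fin (m + 1))).card ≤ S.card :=
      Finset.card_le_card (fun w _ => h w)
    simp at this
    omega
  obtain ⟨w, hw⟩ := this
  have hwgood : ¬ ∃ x ∈ A w, ∃ j j' : Fin m, Δ x j = Δ a j' := by
    intro h
    exact hw (Finset.mem_filter.2 ⟨Finset.mem_univ _, h⟩)
  push_neg at hwgood
  refine ⟨w, ?_⟩
  intro x hxm y hym hxy j j'
  rcases Finset.mem_insert.1 hxm with rfl | hxA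
  · rcases Finset.mem_insert.1 hym with rfl | hyA
    · exact absurd rfl hxy
    · exact fun h => hwgood y hyA j' j h.symm
  · rcases Finset.mem_insert.1 hym with rfl | hyA
    · exact hwgood x hxA j j'
    · exact hrain x (hmem _ _ hxA) y (hmem _ _ hyA) hxy j j'
end

section
/- Let ℬ = {p'_1, ..., p'_{k'}} be a finite set of pairwise distinct nonzero integral polynomials, where p'_1 has minimal degree among them, and let h < d_max be natural numbers such that for every j ∈ {1,...,k'} and every d with h < d ≤ d_max, the polynomial p'_j(x+d) − p'_1(x) − p'_j(d) is not equal (as a polynomial) to p'_{j'}(x) − p'_1(x) for any j'. Let ℬ* be the set of nonzero polynomials among { p'_j(x+d) − p'_1(x) − p'_j(d) : 1 ≤ j ≤ k', h < d ≤ d_max } ∪ { p'_j(x) − p'_1(x) : 1 ≤ j ≤ k' }. Then every element of ℬ* is an integral polynomial and ω(ℬ*) < ω(ℬ). -/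
open Polynomial

/-- `weightAt A i` is the number of distinct leading coefficients of the
degree-`i` polynomials in `A`, i.e. the `i`-th entry `N_i(A)` of the weight
vector `ω(A)`. -/
def weightAt (A : Finset (Polynomial ℤ)) (i : ℕ) : ℕ :=
  ((A.filter fun p => p.natDegree = i).image Polynomial.leadingCoeff).card

/-- `weightLT A A'` means `ω(A) < ω(A')`: there is an index `r` with
`N_r(A) < N_r(A')` and `N_i(A) = N_i(A')` for all `i > r` (entries beyond the
maximum degree being `0`). -/
def weightLT (A A' : Finset (Polynomial ℤ)) : Prop :=
  ∃ r : ℕ, weightAt A r < weightAt A' r ∧ ∀ i, r < i → weightAt A i = weightAt A' i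

lemma myNatDegree_sub_sub_le (p₁ s : Polynomial ℤ) (c : ℤ)
    (hle : p₁.natDegree ≤ s.natDegree) :
    (s - p₁ - C c).natDegree ≤ s.natDegree := by
  refine le_trans (natDegree_sub_le _ _) ?_
  simp only [natDegree_C]
  exact max_le (le_trans (natDegree_sub_le _ _) (max_le le_rfl hle)) (Nat.zero_le _)

lemma myCoeff_top (p₁ s : Polynomial ℤ) (c : ℤ) (hn : 1 ≤ p₁.natDegree)
    (hle : p₁.natDegree ≤ s.natDegree) :
    (s - p₁ - C c).coeff s.natDegree = s.coeff s.natDegree - p₁.coeff s.natDegree := by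
  have hm : s.natDegree ≠ 0 := by omega
  rw [coeff_sub, coeff_sub, coeff_C, if_neg hm, sub_zero]

lemma myAux1 (p₁ s : Polynomial ℤ) (c : ℤ) (hn : 1 ≤ p₁.natDegree)
    (hlt : p₁.natDegree < s.natDegree) :
    (s - p₁ - C c).natDegree = s.natDegree ∧
      (s - p₁ - C c).leadingCoeff = s.leadingCoeff := by
  have hle := le_of_lt hlt
  have hc : (s - p₁ - C c).coeff s.natDegree = s.coeff s.natDegree := by
    rw [myCoeff_top p₁ s c hn hle, coeff_eq_zero_of_natDegree_lt hlt, sub_zero]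
  have hs0 : s ≠ 0 := fun h => by rw [h, natDegree_zero] at hlt; omega
  have hne : (s - p₁ - C c).coeff s.natDegree ≠ 0 := by
    rw [hc]; exact mt leadingCoeff_eq_zero.mp hs0
  have hdeg : (s - p₁ - C c).natDegree = s.natDegree :=
    le_antisymm (myNatDegree_sub_sub_le p₁ s c hle) (le_natDegree_of_ne_zero hne)
  exact ⟨hdeg, by rw [leadingCoeff, hdeg, hc]; rfl⟩

lemma myAux2 (p₁ s : Polynomial ℤ) (c : ℤ) (hn : 1 ≤ p₁.natDegree)
    (heq : p₁.natDegree = s.natDegree) (hlc : s.leadingCoeff ≠ p₁.leadingCoeff) :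
    (s - p₁ - C c).natDegree = s.natDegree ∧
      (s - p₁ - C c).leadingCoeff = s.leadingCoeff - p₁.leadingCoeff := by
  have hle : p₁.natDegree ≤ s.natDegree := le_of_eq heq
  have hc : (s - p₁ - C c).coeff s.natDegree = s.leadingCoeff - p₁.leadingCoeff := by
    rw [myCoeff_top p₁ s c hn hle]; rw [leadingCoeff, leadingCoeff, heq]
  have hne : (s - p₁ - C c).coeff s.natDegree ≠ 0 := by
    rw [hc]; exact sub_ne_zero.mpr hlc
  have hdeg : (s - p₁ - C c).natDegree = s.natDegree :=
    le_antisymm (myNatDegree_sub_sub_le p₁ s c hle) (le_natDegree_of_ne_zero hne)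
  exact ⟨hdeg, by rw [leadingCoeff, hdeg, hc]⟩

lemma myAux3 (p₁ s : Polynomial ℤ) (c : ℤ) (hn : 1 ≤ p₁.natDegree)
    (heq : p₁.natDegree = s.natDegree) (hlc : s.leadingCoeff = p₁.leadingCoeff) :
    (s - p₁ - C c).natDegree < s.natDegree := by
  have hle : p₁.natDegree ≤ s.natDegree := le_of_eq heq
  have hc : (s - p₁ - C c).coeff s.natDegree = 0 := by
    rw [myCoeff_top p₁ s c hn hle]
    have : s.leadingCoeff - p₁.leadingCoeff = 0 := sub_eq_zero.mpr hlc
    rwa [leadingCoeff, leadingCoeff, heq] at this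
  rcases eq_or_ne (s - p₁ - C c) 0 with h0 | h0
  · rw [h0, natDegree_zero]; omega
  · refine lt_of_le_of_ne (myNatDegree_sub_sub_le p₁ s c hle) fun hd => ?_
    exact h0 (leadingCoeff_eq_zero.mp (by rw [leadingCoeff, hd, hc]))
/-- **Weight decrease of the auxiliary family `ℬ*`.**
Let `B` be a finite set of pairwise distinct nonzero integral polynomials,
`p₁ ∈ B` of minimal degree, and `h < dmax` naturals such that for every
`p ∈ B` and every `d` with `h < d ≤ dmax` the polynomial
`p(x+d) - p₁(x) - p(d)` differs from `q(x) - p₁(x)` for every `q ∈ B`.  Let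
`Bstar` be the set of nonzero polynomials among the
`p(x+d) - p₁(x) - p(d)` (for `p ∈ B`, `h < d ≤ dmax`) and the `p(x) - p₁(x)`
(for `p ∈ B`).  Then every element of `Bstar` is an integral polynomial and
`ω(Bstar) < ω(B)`. -/
theorem weight_decrease
    (B : Finset (Polynomial ℤ))
    (hB0 : ∀ p ∈ B, p ≠ 0) (hBint : ∀ p ∈ B, p.eval 0 = 0)
    (p₁ : Polynomial ℤ) (hp₁ : p₁ ∈ B)
    (hmin : ∀ p ∈ B, p₁.natDegree ≤ p.natDegree)
    (h dmax : ℕ) (hhd : h < dmax)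
    (hsep : ∀ p ∈ B, ∀ d : ℕ, h < d → d ≤ dmax → ∀ q ∈ B,
      p.comp (X + C (d : ℤ)) - p₁ - C (p.eval (d : ℤ)) ≠ q - p₁)
    (Bstar : Finset (Polynomial ℤ))
    (hBstar : ∀ r : Polynomial ℤ, r ∈ Bstar ↔ r ≠ 0 ∧
      ((∃ p ∈ B, ∃ d : ℕ, h < d ∧ d ≤ dmax ∧
          r = p.comp (X + C (d : ℤ)) - p₁ - C (p.eval (d : ℤ))) ∨
       (∃ p ∈ B, r = p - p₁))) :
    (∀ r ∈ Bstar, r.eval 0 = 0) ∧ weightLT Bstar B := by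
  have hp₁0 : p₁ ≠ 0 := hB0 p₁ hp₁
  have hn1 : 1 ≤ p₁.natDegree := by
    rcases Nat.eq_zero_or_pos p₁.natDegree with h0 | h0
    · exfalso
      apply hp₁0
      rw [eq_C_of_natDegree_eq_zero h0, coeff_zero_eq_eval_zero, hBint p₁ hp₁, map_zero]
    · exact h0
  constructor
  · intro r hr
    obtain ⟨hr0, hcase⟩ := (hBstar r).mp hr
    rcases hcase with ⟨p, hp, d, _, _, rfl⟩ | ⟨p, hp, rfl⟩
    · simp [eval_comp, hBint p₁ hp₁]
    · simp [hBint p hp, hBint p₁ hp₁]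
  · -- classification of elements of Bstar
    have classify : ∀ r ∈ Bstar, ∃ p ∈ B,
        (p₁.natDegree < p.natDegree ∧ r.natDegree = p.natDegree ∧
          r.leadingCoeff = p.leadingCoeff) ∨
        (p₁.natDegree = p.natDegree ∧ p.leadingCoeff ≠ p₁.leadingCoeff ∧
          r.natDegree = p₁.natDegree ∧
          r.leadingCoeff = p.leadingCoeff - p₁.leadingCoeff) ∨
        (r.natDegree < p₁.natDegree) := by
      intro r hr
      obtain ⟨hr0, hcase⟩ := (hBstar r).mp hr
      have key : ∀ p ∈ B, ∀ s : Polynomial ℤ, ∀ c : ℤ,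
          s.natDegree = p.natDegree → s.leadingCoeff = p.leadingCoeff →
          r = s - p₁ - C c → ∃ p' ∈ B,
          (p₁.natDegree < p'.natDegree ∧ r.natDegree = p'.natDegree ∧
            r.leadingCoeff = p'.leadingCoeff) ∨
          (p₁.natDegree = p'.natDegree ∧ p'.leadingCoeff ≠ p₁.leadingCoeff ∧
            r.natDegree = p₁.natDegree ∧
            r.leadingCoeff = p'.leadingCoeff - p₁.leadingCoeff) ∨
          (r.natDegree < p₁.natDegree) := by
        intro p hp s c hsd hsl hre
        subst hre
        refine ⟨p, hp, ?_⟩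
        rcases lt_or_eq_of_le (hmin p hp) with hlt | heq
        · left
          obtain ⟨h1, h2⟩ := myAux1 p₁ s c hn1 (by omega)
          exact ⟨hlt, by rw [h1, hsd], by rw [h2, hsl]⟩
        · rcases eq_or_ne p.leadingCoeff p₁.leadingCoeff with hlc | hlc
          · right; right
            have := myAux3 p₁ s c hn1 (by omega) (by rw [hsl, hlc])
            omega
          · right; left
            obtain ⟨h1, h2⟩ := myAux2 p₁ s c hn1 (by omega) (by rw [hsl]; exact hlc)
            exact ⟨heq, hlc, by rw [h1]; omega, by rw [h2, hsl]⟩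
      rcases hcase with ⟨p, hp, d, _, _, hrq⟩ | ⟨p, hp, hrq⟩
      · have hd1 : (X + C (d : ℤ)).natDegree = 1 := natDegree_X_add_C _
        have hdl : (X + C (d : ℤ)).leadingCoeff = 1 := leadingCoeff_X_add_C _
        refine key p hp (p.comp (X + C (d : ℤ))) (p.eval (d : ℤ)) ?_ ?_ hrq
        · rw [natDegree_comp, hd1, mul_one]
        · rw [leadingCoeff_comp (by rw [hd1]; exact one_ne_zero), hdl, one_pow, mul_one]
      · exact key p hp p 0 rfl rfl (by rw [hrq, map_zero, sub_zero])
    refine ⟨p₁.natDegree, ?_, ?_⟩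
    · -- strict decrease at n₁
      unfold weightAt
      set S := (B.filter fun p => p.natDegree = p₁.natDegree).image leadingCoeff with hS
      have hmem : p₁.leadingCoeff ∈ S :=
        Finset.mem_image.mpr ⟨p₁, Finset.mem_filter.mpr ⟨hp₁, rfl⟩, rfl⟩
      have hsub : ((Bstar.filter fun p => p.natDegree = p₁.natDegree).image leadingCoeff)
          ⊆ (S.erase p₁.leadingCoeff).image (fun x => x - p₁.leadingCoeff) := by
        intro c hc
        obtain ⟨r, hr, rfl⟩ := Finset.mem_image.mp hc
        obtain ⟨hrB, hrd⟩ := Finset.mem_filter.mp hr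
        obtain ⟨p, hp, hcase⟩ := classify r hrB
        rcases hcase with ⟨h1, h2, h3⟩ | ⟨h1, h2, h3, h4⟩ | h1
        · omega
        · refine Finset.mem_image.mpr ⟨p.leadingCoeff, Finset.mem_erase.mpr
            ⟨h2, Finset.mem_image.mpr ⟨p, Finset.mem_filter.mpr ⟨hp, h1.symm⟩, rfl⟩⟩, h4.symm⟩
        · omega
      calc ((Bstar.filter fun p => p.natDegree = p₁.natDegree).image leadingCoeff).card
          ≤ ((S.erase p₁.leadingCoeff).image (fun x => x - p₁.leadingCoeff)).card :=
            Finset.card_le_card hsub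
        _ ≤ (S.erase p₁.leadingCoeff).card := Finset.card_image_le
        _ < S.card := by
            rw [Finset.card_erase_of_mem hmem]
            exact Nat.sub_lt (Finset.card_pos.mpr ⟨_, hmem⟩) one_pos
    · -- equality above n₁
      intro i hi
      unfold weightAt
      congr 1
      apply Finset.Subset.antisymm
      · intro c hc
        obtain ⟨r, hr, rfl⟩ := Finset.mem_image.mp hc
        obtain ⟨hrB, hrd⟩ := Finset.mem_filter.mp hr
        obtain ⟨p, hp, hcase⟩ := classify r hrB
        rcases hcase with ⟨h1, h2, h3⟩ | ⟨h1, h2, h3, h4⟩ | h1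
        · exact Finset.mem_image.mpr ⟨p, Finset.mem_filter.mpr ⟨hp, by omega⟩, h3.symm⟩
        · omega
        · omega
      · intro c hc
        obtain ⟨p, hpf, rfl⟩ := Finset.mem_image.mp hc
        obtain ⟨hp, hpd⟩ := Finset.mem_filter.mp hpf
        have hne : p - p₁ ≠ 0 := by
          refine sub_ne_zero.mpr fun hpe => ?_
          rw [hpe] at hpd; omega
        have hrB : p - p₁ ∈ Bstar := (hBstar _).mpr ⟨hne, Or.inr ⟨p, hp, rfl⟩⟩
        obtain ⟨h1, h2⟩ := myAux1 p₁ p 0 hn1 (by omega)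
        rw [map_zero, sub_zero] at h1 h2
        exact Finset.mem_image.mpr ⟨p - p₁, Finset.mem_filter.mpr ⟨hrB, by omega⟩, h2⟩
end
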